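/- arXiv:2112.03153 — 2 statements merged into one kernel-verified Lean document; each statement's English description precedes it below -/
import Mathlib

section
/- Let ρ > 0, 0 < h < 1/ρ, β_h = 1 - ρh, θ_h = -log(1-ρh)/(ρh), and T > 0. Then max_{0 ≤ t ≤ T} |β_h^{⌊t/h⌋} - e^{-ρ t}| ≤ ρ((θ_h - 1)T + θ_h h). -/
open Real

lemma exp_neg_sub_exp_neg_le (a b : ℝ) (ha : 0 ≤ a) (hab : a ≤ b) :
    Real.exp (-a) - Real.exp (-b) ≤ b - a := by
  have h1 : Real.exp (-a) ≤ 1 := Real.exp_le_one_iff.mpr (by linarith)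
  have h2 : (a - b) + 1 ≤ Real.exp (a - b) := Real.add_one_le_exp _
  have h3 : Real.exp (-a) * Real.exp (a - b) = Real.exp (-b) := by
    rw [← Real.exp_add]; ring_nf
  have h4 : Real.exp (a - b) ≤ 1 := Real.exp_le_one_iff.mpr (by linarith)
  nlinarith [Real.exp_pos (-a), Real.exp_pos (a - b)]

lemma abs_exp_neg_sub_exp_neg_le (a b : ℝ) (ha : 0 ≤ a) (hb : 0 ≤ b) :
    |Real.exp (-a) - Real.exp (-b)| ≤ |a - b| := by
  rcases le_total a b with hab | hab
  · rw [abs_of_nonneg (by have := Real.exp_le_exp.mpr (neg_le_neg hab); linarith),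
      abs_of_nonpos (by linarith)]
    have := exp_neg_sub_exp_neg_le a b ha hab
    linarith
  · rw [abs_of_nonpos (by have := Real.exp_le_exp.mpr (neg_le_neg hab); linarith),
      abs_of_nonneg (by linarith)]
    have := exp_neg_sub_exp_neg_le b a hb hab
    linarith

/-- Uniform bound on `[0,T]` for the discrepancy between the discrete discount factor
`β_h^{⌊t/h⌋}` and the continuous discount `e^{-ρ t}`. -/
theorem discount_discrepancy_bound (ρ h T : ℝ) (hρ : 0 < ρ) (hh : 0 < h)
    (hhρ : h < 1 / ρ) (hT : 0 < T) :
    ∀ t : ℝ, 0 ≤ t → t ≤ T →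
      |(1 - ρ * h) ^ ⌊t / h⌋₊ - Real.exp (-ρ * t)| ≤
        ρ * ((-Real.log (1 - ρ * h) / (ρ * h) - 1) * T
          + (-Real.log (1 - ρ * h) / (ρ * h)) * h) := by
  intro t ht htT
  have hx : ρ * h < 1 := by
    have := mul_lt_mul_of_pos_left hhρ hρ
    rwa [mul_one_div, div_self (ne_of_gt hρ)] at this
  have h1x : 0 < 1 - ρ * h := by linarith
  set L : ℝ := -Real.log (1 - ρ * h) with hLdef
  have hL : ρ * h ≤ L := by
    have := Real.log_le_sub_one_of_pos h1x
    simp only [hLdef]; linarith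
  have hLpos : 0 < L := lt_of_lt_of_le (by positivity) hL
  set n : ℕ := ⌊t / h⌋₊ with hn
  have hn1 : (n : ℝ) * h ≤ t := by
    have := Nat.floor_le (a := t / h) (by positivity)
    rw [← hn] at this
    calc (n : ℝ) * h ≤ t / h * h := by nlinarith
    _ = t := by field_simp
  have hn2 : t ≤ ((n : ℝ) + 1) * h := by
    have := Nat.lt_floor_add_one (t / h)
    rw [← hn] at this
    have h2 : t / h * h ≤ ((n : ℝ) + 1) * h := by nlinarith
    rwa [div_mul_cancel₀ _ (ne_of_gt hh)] at h2
  have hpow : (1 - ρ * h) ^ n = Real.exp (-((n : ℝ) * L)) := by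
    rw [← Real.exp_log h1x, ← Real.exp_nat_mul]
    congr 1
    simp only [hLdef]; ring
  have hexp : Real.exp (-ρ * t) = Real.exp (-(ρ * t)) := by ring_nf
  rw [hpow, hexp]
  have key : |(n : ℝ) * L - ρ * t| ≤ ρ * ((L / (ρ * h) - 1) * T + L / (ρ * h) * h) := by
    have hD : L / (ρ * h) * (ρ * h) = L := div_mul_cancel₀ _ (by positivity)
    rw [abs_le]
    constructor
    · nlinarith [mul_nonneg (sub_nonneg.mpr hn2) hLpos.le,
        mul_nonneg (sub_nonneg.mpr hL) ht,
        mul_nonneg (sub_nonneg.mpr hL) hT.le]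
    · nlinarith [mul_nonneg (sub_nonneg.mpr hn1) hLpos.le,
        mul_nonneg (sub_nonneg.mpr hL) (sub_nonneg.mpr htT)]
  calc |Real.exp (-((n : ℝ) * L)) - Real.exp (-(ρ * t))| ≤ |(n : ℝ) * L - ρ * t| :=
        abs_exp_neg_sub_exp_neg_le _ _ (by positivity) (by positivity)
    _ ≤ _ := key
end

section
/- Let ρ > 0, 0 < h < 1/ρ, β_h = 1 - ρh, θ_h = -log(1-ρh)/(ρh), and M ≥ 0. If b : [0,∞) → ℝ satisfies |b(t)| ≤ M for all t, then ∫₀^∞ |b(t)| · |e^{-ρt} - e^{-ρ θ_h ⌊t/h⌋ h}| dt ≤ M ρ e^{θ_h ρ h} ∫₀^∞ e^{-ρt}((θ_h-1)t + θ_h h) dt = M e^{θ_h ρ h}((θ_h-1)/ρ + θ_h h), and consequently this quantity is ≤ C h for some constant C and all sufficiently small h. -/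
/-!
Write `θ = -log (1 - ρh) / (ρh)` and `n = ⌊t / h⌋`, so that `nh ≤ t < nh + h` and `θ ≥ 1`.
Then the exponents `-ρt` and `-ρθnh` differ by at most `ρ((θ - 1)t + θh)` and both are at most
`θρh - ρt`, so `|eᵃ - eᵇ| ≤ e^{max a b} |a - b|` dominates the integrand by
`M ρ e^{θρh} e^{-ρt} ((θ - 1)t + θh)`, whose integral is elementary.
For the `O(h)` bound, `e^{θρh} = (1 - ρh)⁻¹`, and `1 - 1/x ≤ log x ≤ x - 1` give
`1 ≤ θ ≤ (1 - ρh)⁻¹`, hence `θ - 1 = O(h)`.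
-/

open Real MeasureTheory Set Filter Topology

lemma integral_exp_neg_mul_mul_add_Ioi {ρ A B : ℝ} (hρ : 0 < ρ) (hA : 0 ≤ A) (hB : 0 ≤ B) :
    IntegrableOn (fun t ↦ exp (-ρ * t) * (A * t + B)) (Ioi 0) ∧
      ∫ t in Ioi 0, exp (-ρ * t) * (A * t + B) = A / ρ ^ 2 + B / ρ := by
  set F : ℝ → ℝ := fun t ↦ (-(A / ρ) * t - (A / ρ ^ 2 + B / ρ)) * exp (-ρ * t)
  have hF : ∀ t, HasDerivAt F (exp (-ρ * t) * (A * t + B)) t := fun t ↦ by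
    refine ((((hasDerivAt_id' t).const_mul (-(A / ρ))).sub_const (A / ρ ^ 2 + B / ρ)).mul
      ((hasDerivAt_id' t).const_mul (-ρ)).exp).congr_deriv ?_
    field_simp
    ring
  have hF_top : Tendsto F atTop (𝓝 0) := by
    have h := ((tendsto_rpow_mul_exp_neg_mul_atTop_nhds_zero 1 ρ hρ).const_mul (-(A / ρ))).add
      ((tendsto_exp_neg_atTop_nhds_zero.comp (tendsto_id.const_mul_atTop hρ)).const_mul
        (-(A / ρ ^ 2 + B / ρ)))
    simp only [mul_zero, add_zero] at h
    refine h.congr fun t ↦ ?_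
    simp only [F, rpow_one, Function.comp, id, neg_mul]
    ring
  have hF0 : ContinuousWithinAt F (Ici 0) 0 := (hF 0).continuousAt.continuousWithinAt
  have hnonneg : ∀ t ∈ Ioi (0 : ℝ), 0 ≤ exp (-ρ * t) * (A * t + B) := fun t ht ↦ by
    have : 0 < t := ht
    positivity
  refine ⟨integrableOn_Ioi_deriv_of_nonneg hF0 (fun t _ ↦ hF t) hnonneg hF_top, ?_⟩
  rw [integral_Ioi_of_hasDerivAt_of_nonneg hF0 (fun t _ ↦ hF t) hnonneg hF_top]
  simp [F]

lemma mul_integral_exp_neg_mul_mul_add_Ioi {ρ A B c E : ℝ} (hρ : 0 < ρ) (hA : 0 ≤ A)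
    (hB : 0 ≤ B) :
    c * ρ * E * ∫ t in Ioi 0, exp (-ρ * t) * (A * t + B) = c * E * (A / ρ + B) := by
  rw [(integral_exp_neg_mul_mul_add_Ioi hρ hA hB).2]
  field_simp

lemma abs_exp_sub_exp_le_exp_max_mul (a b : ℝ) :
    |exp a - exp b| ≤ exp (max a b) * |a - b| := by
  wlog hba : b ≤ a generalizing a b
  · rw [abs_sub_comm, max_comm, abs_sub_comm a]
    exact this b a (le_of_not_ge hba)
  rw [abs_of_nonneg (sub_nonneg.2 (exp_le_exp.2 hba)), abs_of_nonneg (sub_nonneg.2 hba),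
    max_eq_left hba]
  have hb : exp b = exp a * exp (b - a) := by rw [← exp_add, add_sub_cancel]
  nlinarith [add_one_le_exp (b - a), exp_pos a]

lemma abs_exp_neg_mul_sub_exp_neg_mul_le {ρ θ h s t : ℝ} (hρ : 0 ≤ ρ) (hθ : 1 ≤ θ)
    (hs : 0 ≤ s) (hst : s ≤ t) (hts : t < s + h) :
    |exp (-ρ * t) - exp (-ρ * θ * s)| ≤
      ρ * exp (θ * ρ * h) * (exp (-ρ * t) * ((θ - 1) * t + θ * h)) := by
  have hh : 0 < h := by linarith
  have hmax : max (-ρ * t) (-ρ * θ * s) ≤ θ * ρ * h + -ρ * t := by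
    refine max_le (by nlinarith [mul_nonneg (mul_nonneg (by linarith : (0:ℝ) ≤ θ) hρ) hh.le]) ?_
    nlinarith [mul_le_mul_of_nonneg_left hts.le (mul_nonneg hρ (by linarith : (0:ℝ) ≤ θ)),
      mul_nonneg (mul_nonneg hρ (sub_nonneg.2 hθ)) (by linarith : 0 ≤ t)]
  have hdiff : |-ρ * t - -ρ * θ * s| ≤ ρ * ((θ - 1) * t + θ * h) := by
    rw [abs_le]
    constructor
    · nlinarith [mul_le_mul_of_nonneg_left hts.le (mul_nonneg hρ (by linarith : (0:ℝ) ≤ θ)),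
        mul_nonneg (mul_nonneg hρ (sub_nonneg.2 hθ)) (hs.trans hst)]
    · nlinarith [mul_le_mul_of_nonneg_left hst (mul_nonneg hρ (by linarith : (0:ℝ) ≤ θ)),
        mul_nonneg (mul_nonneg hρ (by linarith : (0:ℝ) ≤ θ)) hh.le]
  calc |exp (-ρ * t) - exp (-ρ * θ * s)|
      ≤ exp (θ * ρ * h + -ρ * t) * (ρ * ((θ - 1) * t + θ * h)) :=
        (abs_exp_sub_exp_le_exp_max_mul _ _).trans
          (mul_le_mul (exp_le_exp.2 hmax) hdiff (abs_nonneg _) (exp_pos _).le)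
    _ = ρ * exp (θ * ρ * h) * (exp (-ρ * t) * ((θ - 1) * t + θ * h)) := by
        rw [exp_add]; ring

lemma floor_div_mul_le_and_lt_add {h t : ℝ} (hh : 0 < h) (ht : 0 ≤ t) :
    (⌊t / h⌋₊ : ℝ) * h ≤ t ∧ t < (⌊t / h⌋₊ : ℝ) * h + h := by
  constructor
  · exact (le_div_iff₀ hh).1 (Nat.floor_le (div_nonneg ht hh.le))
  · rw [← add_one_mul, ← div_lt_iff₀ hh]
    exact Nat.lt_floor_add_one _

theorem integral_abs_mul_abs_exp_sub_exp_floor_le {ρ θ h M : ℝ} {b : ℝ → ℝ} (hρ : 0 < ρ)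
    (hθ : 1 ≤ θ) (hh : 0 < h) (hM : 0 ≤ M) (hb : ∀ t, |b t| ≤ M) :
    ∫ t in Ioi 0, |b t| * |exp (-ρ * t) - exp (-ρ * θ * ⌊t / h⌋₊ * h)| ≤
      M * ρ * exp (θ * ρ * h) * ∫ t in Ioi 0, exp (-ρ * t) * ((θ - 1) * t + θ * h) := by
  have hpointwise : ∀ t ∈ Ioi (0 : ℝ), |b t| * |exp (-ρ * t) - exp (-ρ * θ * ⌊t / h⌋₊ * h)| ≤
      M * ρ * exp (θ * ρ * h) * (exp (-ρ * t) * ((θ - 1) * t + θ * h)) := fun t ht ↦ by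
    obtain ⟨hle, hlt⟩ := floor_div_mul_le_and_lt_add hh (le_of_lt ht)
    rw [mul_assoc (-ρ * θ), mul_assoc M ρ, mul_assoc M]
    exact mul_le_mul (hb t) (abs_exp_neg_mul_sub_exp_neg_mul_le hρ.le hθ (by positivity) hle hlt)
      (abs_nonneg _) hM
  rw [← integral_const_mul]
  refine integral_mono_of_nonneg (.of_forall fun t ↦ by positivity)
    (((integral_exp_neg_mul_mul_add_Ioi hρ (sub_nonneg.2 hθ) (by positivity)).1).const_mul _) ?_
  exact (ae_restrict_iff' measurableSet_Ioi).2 (.of_forall hpointwise)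

lemma one_le_neg_log_one_sub_div {x : ℝ} (hx₀ : 0 < x) (hx₁ : x < 1) :
    1 ≤ -log (1 - x) / x := by
  rw [le_div_iff₀ hx₀]
  linarith [log_le_sub_one_of_pos (sub_pos.2 hx₁)]

lemma neg_log_one_sub_div_le_inv {x : ℝ} (hx₀ : 0 < x) (hx₁ : x < 1) :
    -log (1 - x) / x ≤ (1 - x)⁻¹ := by
  have h1x : 0 < 1 - x := sub_pos.2 hx₁
  rw [div_le_iff₀ hx₀]
  have : (1 - x)⁻¹ * x = (1 - x)⁻¹ - 1 := by field_simp; ring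
  linarith [one_sub_inv_le_log_of_pos h1x]

lemma exp_neg_log_one_sub_div_mul {x : ℝ} (hx₀ : 0 < x) (hx₁ : x < 1) :
    exp (-log (1 - x) / x * x) = (1 - x)⁻¹ := by
  rw [div_mul_cancel₀ _ hx₀.ne', exp_neg, exp_log (sub_pos.2 hx₁)]

lemma mul_inv_one_sub_mul_add_le {ρ h θ M : ℝ} (hρ : 0 < ρ) (hh : 0 < h) (hM : 0 ≤ M)
    (hρh : ρ * h ≤ 1 / 2) (hθ₁ : 1 ≤ θ) (hθ : θ ≤ (1 - ρ * h)⁻¹) :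
    M * (1 - ρ * h)⁻¹ * ((θ - 1) / ρ + θ * h) ≤ 8 * M * h := by
  have h1x : 0 < 1 - ρ * h := by linarith
  have hinv : (1 - ρ * h)⁻¹ ≤ 2 := by
    rw [inv_le_comm₀ h1x two_pos]; linarith
  have hθ_sub : (θ - 1) / ρ ≤ 2 * h := by
    rw [div_le_iff₀ hρ]
    have : (1 - ρ * h)⁻¹ - 1 = ρ * h * (1 - ρ * h)⁻¹ := by field_simp; ring
    nlinarith [mul_le_mul_of_nonneg_left hinv (by positivity : 0 ≤ ρ * h)]
  have hsum : (θ - 1) / ρ + θ * h ≤ 4 * h := by nlinarith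
  calc M * (1 - ρ * h)⁻¹ * ((θ - 1) / ρ + θ * h) ≤ M * 2 * (4 * h) := by
        gcongr
    _ = 8 * M * h := by ring

theorem discounting_error_integral_general (ρ M : ℝ) (hρ : 0 < ρ) (hM : 0 ≤ M)
    (b : ℝ → ℝ) (hbdd : ∀ t : ℝ, |b t| ≤ M) :
    (∀ h : ℝ, 0 < h → h < 1 / ρ →
      (∫ t in Set.Ioi (0:ℝ), |b t| *
          |Real.exp (-ρ * t) -
            Real.exp (-ρ * (-Real.log (1 - ρ * h) / (ρ * h)) * (⌊t / h⌋₊ : ℝ) * h)| ≤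
        M * ρ * Real.exp ((-Real.log (1 - ρ * h) / (ρ * h)) * ρ * h) *
          ∫ t in Set.Ioi (0:ℝ), Real.exp (-ρ * t) *
            ((-Real.log (1 - ρ * h) / (ρ * h) - 1) * t
              + (-Real.log (1 - ρ * h) / (ρ * h)) * h)) ∧
      M * ρ * Real.exp ((-Real.log (1 - ρ * h) / (ρ * h)) * ρ * h) *
          (∫ t in Set.Ioi (0:ℝ), Real.exp (-ρ * t) *
            ((-Real.log (1 - ρ * h) / (ρ * h) - 1) * t
              + (-Real.log (1 - ρ * h) / (ρ * h)) * h)) =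
        M * Real.exp ((-Real.log (1 - ρ * h) / (ρ * h)) * ρ * h) *
          ((-Real.log (1 - ρ * h) / (ρ * h) - 1) / ρ
            + (-Real.log (1 - ρ * h) / (ρ * h)) * h)) ∧
    (∃ C : ℝ, ∃ h₀ > (0:ℝ), ∀ h : ℝ, 0 < h → h ≤ h₀ →
      (∫ t in Set.Ioi (0:ℝ), |b t| *
          |Real.exp (-ρ * t) -
            Real.exp (-ρ * (-Real.log (1 - ρ * h) / (ρ * h)) * (⌊t / h⌋₊ : ℝ) * h)|) ≤
        C * h) := by
  have hθ : ∀ h, 0 < h → h < 1 / ρ → 1 ≤ -log (1 - ρ * h) / (ρ * h) := fun h hh hh₁ ↦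
    one_le_neg_log_one_sub_div (by positivity) (by linarith [(lt_div_iff₀ hρ).1 hh₁])
  refine ⟨fun h hh hh₁ ↦ ⟨integral_abs_mul_abs_exp_sub_exp_floor_le hρ (hθ h hh hh₁) hh hM hbdd,
    mul_integral_exp_neg_mul_mul_add_Ioi hρ (sub_nonneg.2 (hθ h hh hh₁))
      (mul_nonneg (zero_le_one.trans (hθ h hh hh₁)) hh.le)⟩,
    8 * M, 1 / (2 * ρ), by positivity, fun h hh hh₀ ↦ ?_⟩
  have hρh : ρ * h ≤ 1 / 2 := by linarith [(le_div_iff₀ (by positivity)).1 hh₀]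
  have hρh₁ : ρ * h < 1 := by linarith
  have hθh := hθ h hh (by rw [lt_div_iff₀ hρ]; linarith)
  refine (integral_abs_mul_abs_exp_sub_exp_floor_le hρ hθh hh hM hbdd).trans ?_
  rw [mul_integral_exp_neg_mul_mul_add_Ioi hρ (sub_nonneg.2 hθh)
    (mul_nonneg (zero_le_one.trans hθh) hh.le), mul_assoc _ ρ,
    exp_neg_log_one_sub_div_mul (by positivity) hρh₁]
  exact mul_inv_one_sub_mul_add_le hρ hh hM hρh hθh
    (neg_log_one_sub_div_le_inv (by positivity) hρh₁)

/-- For a bounded function `b`, the discounting error integral is bounded by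
`M ρ e^{θ_h ρ h} ∫₀^∞ e^{-ρ t}((θ_h - 1) t + θ_h h) dt = M e^{θ_h ρ h}((θ_h-1)/ρ + θ_h h)`,
which is `O(h)` as `h → 0⁺`. -/
theorem discounting_error_integral (ρ M : ℝ) (hρ : 0 < ρ) (hM : 0 ≤ M)
    (b : ℝ → ℝ) (hmeas : Measurable b) (hbdd : ∀ t : ℝ, |b t| ≤ M) :
    (∀ h : ℝ, 0 < h → h < 1 / ρ →
      (∫ t in Set.Ioi (0:ℝ), |b t| *
          |Real.exp (-ρ * t) -
            Real.exp (-ρ * (-Real.log (1 - ρ * h) / (ρ * h)) * (⌊t / h⌋₊ : ℝ) * h)| ≤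
        M * ρ * Real.exp ((-Real.log (1 - ρ * h) / (ρ * h)) * ρ * h) *
          ∫ t in Set.Ioi (0:ℝ), Real.exp (-ρ * t) *
            ((-Real.log (1 - ρ * h) / (ρ * h) - 1) * t
              + (-Real.log (1 - ρ * h) / (ρ * h)) * h)) ∧
      M * ρ * Real.exp ((-Real.log (1 - ρ * h) / (ρ * h)) * ρ * h) *
          (∫ t in Set.Ioi (0:ℝ), Real.exp (-ρ * t) *
            ((-Real.log (1 - ρ * h) / (ρ * h) - 1) * t
              + (-Real.log (1 - ρ * h) / (ρ * h)) * h)) =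
        M * Real.exp ((-Real.log (1 - ρ * h) / (ρ * h)) * ρ * h) *
          ((-Real.log (1 - ρ * h) / (ρ * h) - 1) / ρ
            + (-Real.log (1 - ρ * h) / (ρ * h)) * h)) ∧
    (∃ C : ℝ, ∃ h₀ > (0:ℝ), ∀ h : ℝ, 0 < h → h ≤ h₀ →
      (∫ t in Set.Ioi (0:ℝ), |b t| *
          |Real.exp (-ρ * t) -
            Real.exp (-ρ * (-Real.log (1 - ρ * h) / (ρ * h)) * (⌊t / h⌋₊ : ℝ) * h)|) ≤
        C * h) :=
  discounting_error_integral_general ρ M hρ hM b hbdd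
end
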